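/- (Closed form for the conditional Sibson mutual information.) Fix α > 1 and a prior probability measure w on Θ. The minimum over batch predictors p̂ of the conditional Rényi divergence D_α(Y‖Ŷ | θ, X^n) = (1/(α−1))·log( ∫_Θ Σ_{x^n} p_θ(x^n) Σ_y p_θ(y)(p_θ(y)/p̂(y|x^n))^{α−1} w(dθ) ) equals I_α^w(θ,Y|X^n) = (1/(α−1))·log Σ_{x^n} { Σ_y ( ∫_Θ p_θ(x^n) p_θ(y)^α w(dθ) )^{1/α} }^α, and the minimum is attained by the conditional α-NML predictor p̂_α(y|x^n) = ( ∫_Θ p_θ(y)^α w(dθ|x^n) )^{1/α} / Σ_{y'} ( ∫_Θ p_θ(y')^α w(dθ|x^n) )^{1/α}, where w(dθ|x^n) = w(dθ) p_θ(x^n)/∫_Θ p_{θ'}(x^n) w(dθ') is the posterior. -/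

import Mathlib

open MeasureTheory Real Filter

/-- `q` is a probability mass function on the finite type `B`. -/
def IsPMF {B : Type*} [Fintype B] (q : B → ℝ) : Prop :=
  (∀ y, 0 ≤ q y) ∧ ∑ y, q y = 1

/-- Probability of a tuple of `n` i.i.d. batches: `p_θ(x^n) = ∏ i, p_θ(x_i)`. -/
def prodP {Θ B : Type*} (p : Θ → B → ℝ) (n : ℕ) (θ : Θ) (x : Fin n → B) : ℝ :=
  ∏ i, p θ (x i)

/-- The batch `α`-regret
`R_α(p̂,θ) = (1/(α-1)) log ( Σ_{x^n} p_θ(x^n) Σ_y p_θ(y) (p_θ(y)/p̂(y|x^n))^(α-1) )`. -/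
noncomputable def alphaRegret {Θ B : Type*} [Fintype B] (α : ℝ) (p : Θ → B → ℝ) (n : ℕ)
    (phat : (Fin n → B) → B → ℝ) (θ : Θ) : ℝ :=
  (α - 1)⁻¹ * Real.log (∑ x : Fin n → B, prodP p n θ x *
    ∑ y : B, p θ y * (p θ y / phat x y) ^ (α - 1))

/-- The conditional Rényi divergence `D_α(Y ‖ Ŷ | θ, X^n)` under the joint law
`w(dθ) p_θ(x^n) p_θ(y)`. -/
noncomputable def condRenyiDiv {Θ B : Type*} [MeasurableSpace Θ] [Fintype B] (α : ℝ)
    (p : Θ → B → ℝ) (n : ℕ) (w : Measure Θ) (phat : (Fin n → B) → B → ℝ) : ℝ :=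
  (α - 1)⁻¹ * Real.log (∫ θ, (∑ x : Fin n → B, prodP p n θ x *
    ∑ y : B, p θ y * (p θ y / phat x y) ^ (α - 1)) ∂w)

/-- The conditional Sibson mutual information
`I_α^w(θ,Y|X^n) = (1/(α-1)) log Σ_{x^n} { Σ_y ( ∫ p_θ(x^n) p_θ(y)^α w(dθ) )^(1/α) }^α`. -/
noncomputable def sibsonMI {Θ B : Type*} [MeasurableSpace Θ] [Fintype B] (α : ℝ)
    (p : Θ → B → ℝ) (n : ℕ) (w : Measure Θ) : ℝ :=
  (α - 1)⁻¹ * Real.log (∑ x : Fin n → B,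
    (∑ y : B, (∫ θ, prodP p n θ x * p θ y ^ α ∂w) ^ α⁻¹) ^ α)

/-- Integral of `g` against the posterior `w(dθ|x^n) = w(dθ) p_θ(x^n) / ∫ p_θ'(x^n) w(dθ')`. -/
noncomputable def posteriorInt {Θ B : Type*} [MeasurableSpace Θ] (p : Θ → B → ℝ) (n : ℕ)
    (w : Measure Θ) (x : Fin n → B) (g : Θ → ℝ) : ℝ :=
  (∫ θ, prodP p n θ x * g θ ∂w) / (∫ θ, prodP p n θ x ∂w)

/-- The conditional `α`-NML predictor
`p̂_α(y|x^n) = ( ∫ p_θ(y)^α w(dθ|x^n) )^(1/α) / Σ_y' ( ∫ p_θ(y')^α w(dθ|x^n) )^(1/α)`. -/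
noncomputable def alphaNML {Θ B : Type*} [MeasurableSpace Θ] [Fintype B] (α : ℝ)
    (p : Θ → B → ℝ) (n : ℕ) (w : Measure Θ) (x : Fin n → B) (y : B) : ℝ :=
  (posteriorInt p n w x fun θ => p θ y ^ α) ^ α⁻¹ /
    ∑ y' : B, (posteriorInt p n w x fun θ => p θ y' ^ α) ^ α⁻¹

/-!
Expanding `p_θ(y) (p_θ(y)/p̂(y|x^n))^(α-1) = p_θ(y)^α p̂(y|x^n)^(1-α)` and exchanging the finite
sums with the integral turns the conditional Rényi integrand into
`Σ_{x^n} Σ_y A(x^n, y) p̂(y|x^n)^(1-α)` with `A(x^n, y) = ∫ p_θ(x^n) p_θ(y)^α w(dθ)`.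
For each `x^n`, Jensen's inequality for the convex map `t ↦ t^α`, applied with weights `p̂(·|x^n)`
to the points `A(x^n, y)^(1/α) / p̂(y|x^n)`, bounds the inner sum below by
`(Σ_y A(x^n, y)^(1/α))^α`, with equality when `p̂(·|x^n) ∝ A(x^n, ·)^(1/α)`.
The posterior normalisation cancels in the `α`-NML predictor, which is therefore exactly this
optimiser.
-/

lemma mul_div_rpow_sub_one_eq {α b c : ℝ} (hα : α ≠ 0) (hb : 0 ≤ b) (hc : 0 ≤ c) :
    b * (b / c) ^ (α - 1) = b ^ α * c ^ (1 - α) := by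
  rw [div_rpow hb hc, ← mul_div_assoc, div_eq_mul_inv, ← rpow_neg hc, neg_sub]
  congr 1
  conv_lhs => enter [1]; rw [← rpow_one b]
  rw [← rpow_add' hb (by simpa using hα), add_sub_cancel]

section FiniteSums

variable {B : Type*} [Fintype B] {α : ℝ} {A : B → ℝ}

lemma rpow_sum_rpow_inv_le_sum_mul_rpow_one_sub (hα : 1 ≤ α) (hA : ∀ y, 0 ≤ A y) {q : B → ℝ}
    (hq : ∀ y, 0 < q y) (hq1 : ∑ y, q y = 1) :
    (∑ y, A y ^ α⁻¹) ^ α ≤ ∑ y, A y * q y ^ (1 - α) := by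
  have hα0 : α ≠ 0 := by positivity
  calc (∑ y, A y ^ α⁻¹) ^ α = (∑ y, q y * (A y ^ α⁻¹ / q y)) ^ α := by
        simp_rw [mul_div_cancel₀ _ (hq _).ne']
    _ ≤ ∑ y, q y * (A y ^ α⁻¹ / q y) ^ α :=
        rpow_arith_mean_le_arith_mean_rpow _ _ _ (fun y _ => (hq y).le) hq1
          (fun y _ => div_nonneg (rpow_nonneg (hA y) _) (hq y).le) hα
    _ = ∑ y, A y * q y ^ (1 - α) := Finset.sum_congr rfl fun y _ => by
        rw [div_rpow (rpow_nonneg (hA y) _) (hq y).le, rpow_inv_rpow (hA y) hα0,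
          rpow_sub (hq y), rpow_one]
        field_simp

lemma sum_mul_rpow_one_sub_normalized (hα : α ≠ 0) (hA : ∀ y, 0 ≤ A y) :
    ∑ y, A y * (A y ^ α⁻¹ / ∑ y', A y' ^ α⁻¹) ^ (1 - α) = (∑ y, A y ^ α⁻¹) ^ α := by
  set S := ∑ y', A y' ^ α⁻¹
  have hS : 0 ≤ S := Finset.sum_nonneg fun y _ => rpow_nonneg (hA y) _
  have term : ∀ y, A y * (A y ^ α⁻¹ / S) ^ (1 - α) = A y ^ α⁻¹ * S ^ (α - 1) := by
    intro y
    have ha := rpow_nonneg (hA y) α⁻¹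
    conv_lhs => enter [1]; rw [← rpow_inv_rpow (hA y) hα]
    rw [div_rpow ha hS, ← mul_div_assoc, ← rpow_add' ha (by simp), add_sub_cancel, rpow_one,
      div_eq_mul_inv, ← rpow_neg hS, neg_sub]
  rw [Finset.sum_congr rfl fun y _ => term y, ← Finset.sum_mul]
  conv_rhs => rw [← add_sub_cancel 1 α, rpow_add' hS (by simpa using hα), rpow_one]

lemma div_rpow_div_sum_div_rpow {Z : ℝ} (hZ : 0 < Z) (hA : ∀ y, 0 ≤ A y) (r : ℝ) (y : B) :
    (A y / Z) ^ r / ∑ y', (A y' / Z) ^ r = A y ^ r / ∑ y', A y' ^ r := by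
  simp_rw [div_rpow (hA _) hZ.le, ← Finset.sum_div]
  exact div_div_div_cancel_right₀ (rpow_pos_of_pos hZ r).ne' _ _

end FiniteSums

lemma sum_rpow_sum_rpow_pos {ι κ : Type*} [Fintype ι] [Fintype κ] {A : ι → κ → ℝ}
    (hA : ∀ i j, 0 ≤ A i j) (h : 0 < ∑ i, ∑ j, A i j) (r s : ℝ) :
    0 < ∑ i, (∑ j, A i j ^ r) ^ s := by
  have hsum : ∀ i, 0 ≤ ∑ j, A i j := fun i => Finset.sum_nonneg fun j _ => hA i j
  obtain ⟨i, -, hi⟩ := (Finset.sum_pos_iff_of_nonneg fun i _ => hsum i).1 h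
  obtain ⟨j, -, hj⟩ := (Finset.sum_pos_iff_of_nonneg fun j _ => hA i j).1 hi
  have hrow : 0 < ∑ j, A i j ^ r := (Finset.sum_pos_iff_of_nonneg fun j _ =>
    rpow_nonneg (hA i j) r).2 ⟨j, Finset.mem_univ j, rpow_pos_of_pos hj r⟩
  exact (Finset.sum_pos_iff_of_nonneg fun i _ => rpow_nonneg
    (Finset.sum_nonneg fun j _ => rpow_nonneg (hA i j) r) s).2
    ⟨i, Finset.mem_univ i, rpow_pos_of_pos hrow s⟩

lemma IsPMF.le_one {B : Type*} [Fintype B] {q : B → ℝ} (hq : IsPMF q) (y : B) : q y ≤ 1 :=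
  hq.2 ▸ Finset.single_le_sum (fun y _ => hq.1 y) (Finset.mem_univ y)

lemma IsPMF.exists_pos {B : Type*} [Fintype B] {q : B → ℝ} (hq : IsPMF q) : ∃ y, 0 < q y := by
  obtain ⟨y, -, hy⟩ := Finset.exists_lt_of_sum_lt (s := Finset.univ) (f := 0) (g := q)
    (by simp [hq.2])
  exact ⟨y, hy⟩

section SourceClass

variable {Θ B : Type*} {p : Θ → B → ℝ} {n : ℕ}

lemma measurable_prodP [MeasurableSpace Θ] (hmeas : ∀ y, Measurable fun θ => p θ y)
    (x : Fin n → B) : Measurable fun θ => prodP p n θ x :=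
  Finset.measurable_prod _ fun i _ => hmeas (x i)

variable [Fintype B]

lemma prodP_nonneg {θ : Θ} (hθ : IsPMF (p θ)) (x : Fin n → B) : 0 ≤ prodP p n θ x :=
  Finset.prod_nonneg fun i _ => hθ.1 (x i)

lemma prodP_le_one {θ : Θ} (hθ : IsPMF (p θ)) (x : Fin n → B) : prodP p n θ x ≤ 1 :=
  Finset.prod_le_one (fun i _ => hθ.1 (x i)) fun i _ => hθ.le_one (x i)

lemma sum_prodP {θ : Θ} (hθ : IsPMF (p θ)) : ∑ x : Fin n → B, prodP p n θ x = 1 := by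
  simp [prodP, ← Fintype.prod_sum, hθ.2]

variable [MeasurableSpace Θ] {w : Measure Θ} {α : ℝ}

noncomputable def sibsonWeight (α : ℝ) (p : Θ → B → ℝ) (n : ℕ) (w : Measure Θ)
    (x : Fin n → B) (y : B) : ℝ :=
  ∫ θ, prodP p n θ x * p θ y ^ α ∂w

lemma sibsonWeight_nonneg (hp : ∀ θ, IsPMF (p θ)) (x : Fin n → B) (y : B) :
    0 ≤ sibsonWeight α p n w x y :=
  integral_nonneg fun θ => mul_nonneg (prodP_nonneg (hp θ) x) (rpow_nonneg ((hp θ).1 y) α)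

variable [IsFiniteMeasure w]

lemma integrable_prodP_mul_rpow (hα : 0 ≤ α) (hp : ∀ θ, IsPMF (p θ))
    (hmeas : ∀ y, Measurable fun θ => p θ y) (x : Fin n → B) (y : B) :
    Integrable (fun θ => prodP p n θ x * p θ y ^ α) w := by
  refine .of_bound (((measurable_prodP hmeas x).mul ((hmeas y).pow_const α)).aestronglyMeasurable)
    1 (ae_of_all _ fun θ => ?_)
  have hy := (hp θ).1 y
  rw [norm_of_nonneg (mul_nonneg (prodP_nonneg (hp θ) x) (rpow_nonneg hy α))]
  exact mul_le_one₀ (prodP_le_one (hp θ) x) (rpow_nonneg hy α)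
    (rpow_le_one hy ((hp θ).le_one y) hα)

lemma sibsonWeight_le_integral_prodP (hα : 0 ≤ α) (hp : ∀ θ, IsPMF (p θ))
    (hmeas : ∀ y, Measurable fun θ => p θ y) (x : Fin n → B) (y : B) :
    sibsonWeight α p n w x y ≤ ∫ θ, prodP p n θ x ∂w :=
  calc sibsonWeight α p n w x y ≤ ∫ θ, prodP p n θ x * p θ y ^ (0 : ℝ) ∂w :=
        integral_mono (integrable_prodP_mul_rpow hα hp hmeas x y)
          (integrable_prodP_mul_rpow le_rfl hp hmeas x y) fun θ =>
            mul_le_mul_of_nonneg_left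
              (by simpa using rpow_le_one ((hp θ).1 y) ((hp θ).le_one y) hα)
              (prodP_nonneg (hp θ) x)
    _ = ∫ θ, prodP p n θ x ∂w := by simp

lemma alphaNML_eq (hα : 0 < α) (hp : ∀ θ, IsPMF (p θ))
    (hmeas : ∀ y, Measurable fun θ => p θ y) (x : Fin n → B) (y : B) :
    alphaNML α p n w x y =
      sibsonWeight α p n w x y ^ α⁻¹ / ∑ y', sibsonWeight α p n w x y' ^ α⁻¹ := by
  rcases (integral_nonneg fun θ => prodP_nonneg (hp θ) x : 0 ≤ ∫ θ, prodP p n θ x ∂w).eq_or_lt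
    with hZ | hZ
  -- with vanishing evidence, `posteriorInt` is `_ / 0 = 0` and every `sibsonWeight` vanishes
  · have hA : ∀ y, sibsonWeight α p n w x y = 0 := fun y =>
      le_antisymm (hZ ▸ sibsonWeight_le_integral_prodP hα.le hp hmeas x y)
        (sibsonWeight_nonneg hp x y)
    simp [alphaNML, posteriorInt, ← hZ, hA, hα.ne']
  · exact div_rpow_div_sum_div_rpow hZ (sibsonWeight_nonneg hp x) _ y

lemma integral_condRenyi_eq (hα : 0 < α) (hp : ∀ θ, IsPMF (p θ))
    (hmeas : ∀ y, Measurable fun θ => p θ y) {q : (Fin n → B) → B → ℝ} (hq : ∀ x y, 0 ≤ q x y) :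
    ∫ θ, (∑ x : Fin n → B, prodP p n θ x * ∑ y : B, p θ y * (p θ y / q x y) ^ (α - 1)) ∂w =
      ∑ x : Fin n → B, ∑ y : B, sibsonWeight α p n w x y * q x y ^ (1 - α) := by
  have hint := integrable_prodP_mul_rpow (n := n) (w := w) hα.le hp hmeas
  simp_rw [Finset.mul_sum, ← mul_assoc, mul_assoc (prodP p n _ _),
    mul_div_rpow_sub_one_eq hα.ne' ((hp _).1 _) (hq _ _), ← mul_assoc]
  rw [integral_finsetSum _ fun x _ => integrable_finsetSum _ fun y _ => (hint x y).mul_const _]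
  refine Finset.sum_congr rfl fun x _ => ?_
  rw [integral_finsetSum _ fun y _ => (hint x y).mul_const _]
  exact Finset.sum_congr rfl fun y _ => integral_mul_const _ _

lemma sum_sum_sibsonWeight_pos [IsProbabilityMeasure w] (hα : 0 ≤ α) (hp : ∀ θ, IsPMF (p θ))
    (hmeas : ∀ y, Measurable fun θ => p θ y) :
    0 < ∑ x : Fin n → B, ∑ y, sibsonWeight α p n w x y := by
  have hint := integrable_prodP_mul_rpow (n := n) (w := w) hα hp hmeas
  have hpos : ∀ θ, 0 < ∑ x : Fin n → B, ∑ y, prodP p n θ x * p θ y ^ α := fun θ => by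
    obtain ⟨y, hy⟩ := (hp θ).exists_pos
    rw [← Finset.sum_mul_sum, sum_prodP (hp θ), one_mul]
    exact Finset.sum_pos' (fun y _ => rpow_nonneg ((hp θ).1 y) α)
      ⟨y, Finset.mem_univ y, rpow_pos_of_pos hy α⟩
  have hint_sum : Integrable (fun θ => ∑ x : Fin n → B, ∑ y, prodP p n θ x * p θ y ^ α) w :=
    integrable_finsetSum _ fun x _ => integrable_finsetSum _ fun y _ => hint x y
  have htotal : ∑ x : Fin n → B, ∑ y, sibsonWeight α p n w x y =
      ∫ θ, ∑ x : Fin n → B, ∑ y, prodP p n θ x * p θ y ^ α ∂w := by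
    rw [integral_finsetSum _ fun x _ => integrable_finsetSum _ fun y _ => hint x y]
    exact Finset.sum_congr rfl fun x _ => (integral_finsetSum _ fun y _ => hint x y).symm
  rw [htotal, integral_pos_iff_support_of_nonneg (fun θ => (hpos θ).le) hint_sum,
    Function.support_eq_univ fun θ => (hpos θ).ne']
  simp

end SourceClass

theorem conditional_sibson_closed_form_general
    {𝒳 Θ : Type*} [Fintype 𝒳] [MeasurableSpace Θ]
    (ℓ n : ℕ) (α : ℝ) (hα : 1 < α)
    (p : Θ → (Fin ℓ → 𝒳) → ℝ)
    (hp : ∀ θ, IsPMF (p θ))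
    (hmeas : ∀ z : Fin ℓ → 𝒳, Measurable fun θ => p θ z)
    (w : Measure Θ) [IsProbabilityMeasure w] :
    (∀ phat : (Fin n → Fin ℓ → 𝒳) → (Fin ℓ → 𝒳) → ℝ,
        (∀ x, IsPMF (phat x)) → (∀ x y, 0 < phat x y) →
        sibsonMI α p n w ≤ condRenyiDiv α p n w phat)
    ∧ condRenyiDiv α p n w (alphaNML α p n w) = sibsonMI α p n w := by
  have hα0 : 0 < α := by linarith
  have hA := sibsonWeight_nonneg (α := α) (n := n) (w := w) hp
  refine ⟨fun phat hphat hphat_pos => ?_, ?_⟩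
  · rw [condRenyiDiv, integral_condRenyi_eq hα0 hp hmeas fun x y => (hphat_pos x y).le]
    refine mul_le_mul_of_nonneg_left (log_le_log ?_ ?_) (inv_nonneg.2 (by linarith))
    · exact sum_rpow_sum_rpow_pos hA (sum_sum_sibsonWeight_pos hα0.le hp hmeas) _ _
    · exact Finset.sum_le_sum fun x _ => rpow_sum_rpow_inv_le_sum_mul_rpow_one_sub hα.le (hA x)
        (hphat_pos x) (hphat x).2
  · have hNML := alphaNML_eq (n := n) (w := w) hα0 hp hmeas
    rw [condRenyiDiv, integral_condRenyi_eq hα0 hp hmeas fun x y => hNML x y ▸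
      div_nonneg (rpow_nonneg (hA x y) _) (Finset.sum_nonneg fun y' _ => rpow_nonneg (hA x y') _)]
    simp_rw [hNML, sum_mul_rpow_one_sub_normalized hα0.ne' (hA _)]
    rfl

/-- **Closed form for the conditional Sibson mutual information.**
For `α > 1` and a prior `w`, the minimum of the conditional Rényi divergence
`D_α(Y‖Ŷ|θ,X^n)` over (everywhere positive) batch predictors `p̂` equals
`I_α^w(θ,Y|X^n) = (1/(α-1)) log Σ_{x^n} { Σ_y ( ∫ p_θ(x^n) p_θ(y)^α w(dθ) )^(1/α) }^α`,
and it is attained by the conditional `α`-NML predictor. -/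
theorem conditional_sibson_closed_form
    {𝒳 Θ : Type*} [Fintype 𝒳] [Nonempty 𝒳] [MeasurableSpace Θ]
    (ℓ n : ℕ) (hℓ : 0 < ℓ) (hn : 0 < n) (α : ℝ) (hα : 1 < α)
    (p : Θ → (Fin ℓ → 𝒳) → ℝ)
    (hp : ∀ θ, IsPMF (p θ))
    (hmeas : ∀ z : Fin ℓ → 𝒳, Measurable fun θ => p θ z)
    (w : Measure Θ) [IsProbabilityMeasure w] :
    (∀ phat : (Fin n → Fin ℓ → 𝒳) → (Fin ℓ → 𝒳) → ℝ,
        (∀ x, IsPMF (phat x)) → (∀ x y, 0 < phat x y) →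
        sibsonMI α p n w ≤ condRenyiDiv α p n w phat)
    ∧ condRenyiDiv α p n w (alphaNML α p n w) = sibsonMI α p n w :=
  conditional_sibson_closed_form_general ℓ n α hα p hp hmeas w
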